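/- Let w^1, ..., w^k ∈ ℕ^d (k ≥ 2) satisfy gcd(w^1_i, ..., w^k_i) = 1 for each i = 1, ..., d. Then there exists R ∈ ℕ such that for every r ∈ ℕ^d with r_i ≥ R for all i and with r_i a multiple of Π_j w^j_i for at least d−1 of the coordinates i, the rectangle Π_{i=1}^d {0, ..., r_i − 1} ⊂ ℤ^d can be partitioned into disjoint translates of the rectangles R_{w^1}, ..., R_{w^k}. -/
import Mathlib


/-- The translate of the discrete rectangle with side lengths `w`, with corner `t`,
as a subset of `ℤ^d`. -/
def zRectAt {d : ℕ} (w : Fin d → ℕ) (t : Fin d → ℤ) : Set (Fin d → ℤ) :=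
  {v | ∀ i, t i ≤ v i ∧ v i < t i + w i}

private lemma gcd_bezout {ι : Type*} [DecidableEq ι] (s : Finset ι) (f : ι → ℕ) :
    ∃ c : ι → ℤ, ((s.gcd f : ℕ) : ℤ) = ∑ j ∈ s, c j * f j := by
  induction s using Finset.induction_on with
  | empty => exact ⟨fun _ => 0, by simp⟩
  | @insert a s ha ih =>
    obtain ⟨c, hc⟩ := ih
    set A := Nat.gcdA (f a) (s.gcd f) with hA
    set B := Nat.gcdB (f a) (s.gcd f) with hB
    refine ⟨fun j => if j = a then A else c j * B, ?_⟩
    rw [Finset.gcd_insert, Finset.sum_insert ha]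
    simp only [if_pos rfl]
    rw [Finset.sum_congr rfl (fun j hj => by
      rw [if_neg (by rintro rfl; exact ha hj)])]
    have hb : ((Nat.gcd (f a) (s.gcd f) : ℕ) : ℤ)
        = (f a : ℤ) * A + ((s.gcd f : ℕ) : ℤ) * B :=
      Nat.gcd_eq_gcd_ab (f a) (s.gcd f)
    have hg : GCDMonoid.gcd (f a) (s.gcd f) = Nat.gcd (f a) (s.gcd f) := rfl
    calc ((GCDMonoid.gcd (f a) (s.gcd f) : ℕ) : ℤ)
        = (f a : ℤ) * A + ((s.gcd f : ℕ) : ℤ) * B := by rw [hg, hb]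
      _ = A * (f a) + (∑ j ∈ s, c j * f j) * B := by rw [← hc]; ring
      _ = A * (f a) + ∑ j ∈ s, c j * B * f j := by
          rw [Finset.sum_mul]; congr 1; exact Finset.sum_congr rfl fun j _ => by ring

private lemma frob {k : ℕ} (hk : 0 < k) (f : Fin k → ℕ) (hf : ∀ j, 0 < f j)
    (h1 : Finset.univ.gcd f = 1) :
    ∃ N : ℕ, ∀ n, N ≤ n → ∃ a : Fin k → ℕ, n = ∑ j, a j * f j := by
  obtain ⟨c, hc⟩ := gcd_bezout Finset.univ f
  rw [h1] at hc
  norm_num at hc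
  set j₀ : Fin k := ⟨0, hk⟩ with hj₀
  set m := f j₀ with hm
  have hm0 : 0 < m := hf j₀
  set t : Fin k → ℕ := fun j => ((c j) % (m:ℤ)).toNat with htdef
  have ht : ∀ j, (t j : ℤ) = c j % (m:ℤ) := fun j =>
    Int.toNat_of_nonneg (Int.emod_nonneg _ (by exact_mod_cast hm0.ne'))
  set u := ∑ j, t j * f j with hu
  have key : (m:ℤ) ∣ (u:ℤ) - 1 := by
    have h2 : (u:ℤ) - 1 = ∑ j, (c j % m - c j) * f j := by
      rw [hc, hu]
      push_cast
      rw [← Finset.sum_sub_distrib]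
      exact Finset.sum_congr rfl fun j _ => by rw [ht]; ring
    rw [h2]
    refine Finset.dvd_sum fun j _ => Dvd.dvd.mul_right ⟨-(c j / m), ?_⟩ _
    rw [Int.emod_def]; ring
  refine ⟨m * u, fun n hn => ?_⟩
  set s := n % m with hs
  have hsm : s < m := Nat.mod_lt _ hm0
  have hsu : s * u ≤ n := le_trans (Nat.mul_le_mul_right u hsm.le) hn
  have hdvd : (m:ℤ) ∣ (n:ℤ) - (s:ℤ) * u := by
    have d1 : (m:ℤ) ∣ (n:ℤ) - s := by
      refine ⟨(n / m : ℕ), ?_⟩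
      have h := Nat.div_add_mod n m
      have h' : (m:ℤ) * ((n/m : ℕ):ℤ) + ((n % m : ℕ):ℤ) = (n:ℤ) := by exact_mod_cast h
      rw [hs]; push_cast; linarith [h']
    have d2 : (m:ℤ) ∣ (s:ℤ) * ((u:ℤ) - 1) := Dvd.dvd.mul_left key s
    have e : (n:ℤ) - (s:ℤ) * u = ((n:ℤ) - s) - (s:ℤ) * ((u:ℤ) - 1) := by ring
    rw [e]; exact dvd_sub d1 d2
  have hdvd' : m ∣ n - s * u := by
    have hcast : ((n - s*u : ℕ) : ℤ) = (n:ℤ) - (s:ℤ)*u := by push_cast [Nat.cast_sub hsu]; ring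
    exact_mod_cast hcast ▸ hdvd
  obtain ⟨q, hq⟩ := hdvd'
  refine ⟨fun j => s * t j + if j = j₀ then q else 0, ?_⟩
  have hsum : ∑ j, (s * t j + if j = j₀ then q else 0) * f j = s * u + q * m := by
    have hterm : ∀ j, (s * t j + if j = j₀ then q else 0) * f j
        = s * (t j * f j) + (if j = j₀ then q * f j else 0) := by
      intro j; split <;> ring
    rw [Finset.sum_congr rfl fun j _ => hterm j, Finset.sum_add_distrib,
      ← Finset.mul_sum, Finset.sum_ite_eq' Finset.univ j₀ (fun j => q * f j)]
    simp [hu, hm]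
  rw [hsum, Nat.mul_comm q m, ← hq]
  exact (Nat.add_sub_cancel' hsu).symm

private lemma slab_exists (B : ℕ → ℕ) :
    ∀ (k x : ℕ), x < ∑ i ∈ Finset.range k, B i →
    ∃ n, n < k ∧ (∑ i ∈ Finset.range n, B i) ≤ x ∧ x < ∑ i ∈ Finset.range (n+1), B i := by
  intro k
  induction k with
  | zero => simp
  | succ k ih =>
    intro x hx
    by_cases h : x < ∑ i ∈ Finset.range k, B i
    · obtain ⟨n, h1, h2, h3⟩ := ih x h
      exact ⟨n, Nat.lt_succ_of_lt h1, h2, h3⟩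
    · exact ⟨k, Nat.lt_succ_self k, le_of_not_gt h, hx⟩

theorem collar_filling (d k : ℕ) (hd : 1 ≤ d) (hk : 2 ≤ k)
    (w : Fin k → Fin d → ℕ) (hw : ∀ j i, 0 < w j i)
    (hgcd : ∀ i, Finset.univ.gcd (fun j => w j i) = 1) :
    ∃ R : ℕ, ∀ r : Fin d → ℕ, (∀ i, R ≤ r i) →
      (∃ i₀ : Fin d, ∀ i, i ≠ i₀ → (∏ j, w j i) ∣ r i) →
      ∃ S : Finset (Fin k × (Fin d → ℤ)),
        (S : Set (Fin k × (Fin d → ℤ))).PairwiseDisjoint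
          (fun jt => zRectAt (w jt.1) jt.2) ∧
        (⋃ jt ∈ S, zRectAt (w jt.1) jt.2) = zRectAt r (fun _ => 0) := by
  classical
  have hfr : ∀ i : Fin d, ∃ N : ℕ, ∀ n, N ≤ n → ∃ a : Fin k → ℕ, n = ∑ j, a j * w j i :=
    fun i => frob (by omega) (fun j => w j i) (fun j => hw j i) (hgcd i)
  choose N hN using hfr
  refine ⟨Finset.univ.sup N, fun r hr hex => ?_⟩
  obtain ⟨i₀, hdvd⟩ := hex
  obtain ⟨a, ha⟩ := hN i₀ (r i₀)
    (le_trans (Finset.le_sup (Finset.mem_univ i₀)) (hr i₀))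
  have hwdvd : ∀ (j : Fin k) (i : Fin d), i ≠ i₀ → w j i ∣ r i := fun j i hi =>
    dvd_trans (Finset.dvd_prod_of_mem (fun j => w j i) (Finset.mem_univ j)) (hdvd i hi)
  -- slab data along coordinate i₀
  set B : ℕ → ℕ := fun p => if h : p < k then a ⟨p, h⟩ * w ⟨p, h⟩ i₀ else 0 with hB
  set o : ℕ → ℕ := fun p => ∑ q ∈ Finset.range p, B q with ho
  have hBj : ∀ j : Fin k, B j.val = a j * w j i₀ := fun j => by
    simp only [hB, dif_pos j.isLt]
  have hosucc : ∀ j : Fin k, o (j.val + 1) = o j.val + a j * w j i₀ := fun j => by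
    simp only [ho]; rw [Finset.sum_range_succ, hBj]
  have homono : ∀ {p q : ℕ}, p ≤ q → o p ≤ o q := fun h =>
    Finset.sum_le_sum_of_subset (Finset.range_subset_range.2 h)
  have hok : o k = r i₀ := by
    simp only [ho]
    rw [ha, ← Fin.sum_univ_eq_sum_range B k]
    exact Finset.sum_congr rfl fun j _ => hBj j
  -- grid sizes and translate corners
  set ng : Fin k → Fin d → ℕ := fun j i => if i = i₀ then a j else r i / w j i with hng
  set T : Fin k → (Fin d → ℕ) → (Fin d → ℤ) := fun j g i =>
    if i = i₀ then ((o j.val + g i₀ * w j i₀ : ℕ) : ℤ)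
    else ((g i * w j i : ℕ) : ℤ) with hT
  -- C1 : the i₀ coordinate
  have C1 : ∀ (j : Fin k) (g : Fin d → ℕ), g i₀ < ng j i₀ → ∀ v : ℤ,
      T j g i₀ ≤ v → v < T j g i₀ + w j i₀ →
      0 ≤ v ∧ v < (r i₀ : ℤ) ∧ o j.val ≤ v.toNat ∧ v.toNat < o (j.val + 1) ∧
        g i₀ = (v.toNat - o j.val) / (w j i₀) := by
    intro j g hg v h1 h2
    have hga : g i₀ < a j := by simpa [hng] using hg
    simp only [hT, if_pos rfl] at h1 h2
    set P := g i₀ * w j i₀ with hP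
    clear_value P
    have hx1 : o j.val + P ≤ v.toNat := by omega
    have hx2 : v.toNat < o j.val + P + w j i₀ := by omega
    have hv0 : 0 ≤ v := by omega
    have hPa : P + w j i₀ ≤ a j * w j i₀ := by
      have hga' : g i₀ + 1 ≤ a j := hga
      calc P + w j i₀ = (g i₀ + 1) * w j i₀ := by rw [hP]; ring
        _ ≤ a j * w j i₀ := Nat.mul_le_mul_right _ hga'
    have hlt : v.toNat < o (j.val + 1) := by rw [hosucc j]; omega
    have h5 : o (j.val + 1) ≤ o k := homono j.isLt
    have hvr : v.toNat < r i₀ := by rw [← hok]; omega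
    refine ⟨hv0, by omega, by omega, hlt, ?_⟩
    have lo : g i₀ * w j i₀ ≤ v.toNat - o j.val := by omega
    have hi : v.toNat - o j.val < (g i₀ + 1) * w j i₀ := by
      have he : (g i₀ + 1) * w j i₀ = P + w j i₀ := by rw [hP]; ring
      omega
    exact (Nat.div_eq_of_lt_le lo hi).symm
  -- C2 : the other coordinates
  have C2 : ∀ (j : Fin k) (g : Fin d → ℕ) (i : Fin d), i ≠ i₀ → g i < ng j i →
      ∀ v : ℤ, T j g i ≤ v → v < T j g i + w j i →
      0 ≤ v ∧ v < (r i : ℤ) ∧ g i = v.toNat / (w j i) := by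
    intro j g i hi hg v h1 h2
    have hgr : g i < r i / w j i := by simpa [hng, if_neg hi] using hg
    simp only [hT, if_neg hi] at h1 h2
    set P := g i * w j i with hP
    clear_value P
    have hx1 : P ≤ v.toNat := by omega
    have hx2 : v.toNat < P + w j i := by omega
    have hv0 : 0 ≤ v := by omega
    have hPr : P + w j i ≤ r i := by
      have h3 : g i + 1 ≤ r i / w j i := hgr
      calc P + w j i = (g i + 1) * w j i := by rw [hP]; ring
        _ ≤ (r i / w j i) * w j i := Nat.mul_le_mul_right _ h3
        _ = r i := Nat.div_mul_cancel (hwdvd j i hi)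
    have hi2 : v.toNat < (g i + 1) * w j i := by
      have he : (g i + 1) * w j i = P + w j i := by rw [hP]; ring
      omega
    exact ⟨hv0, by omega, (Nat.div_eq_of_lt_le (by omega) hi2).symm⟩
  -- uniqueness
  have huniq : ∀ (j j' : Fin k) (g g' : Fin d → ℕ),
      (∀ i, g i < ng j i) → (∀ i, g' i < ng j' i) →
      ∀ v : Fin d → ℤ, v ∈ zRectAt (w j) (T j g) → v ∈ zRectAt (w j') (T j' g') →
      j = j' ∧ g = g' := by
    intro j j' g g' hg hg' v hv hv'
    obtain ⟨-, -, ha1, ha2, ha3⟩ := C1 j g (hg i₀) (v i₀) (hv i₀).1 (hv i₀).2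
    obtain ⟨-, -, hb1, hb2, hb3⟩ := C1 j' g' (hg' i₀) (v i₀) (hv' i₀).1 (hv' i₀).2
    have hjj : j = j' := by
      rcases Nat.lt_trichotomy j.val j'.val with h | h | h
      · exact absurd (lt_of_le_of_lt hb1 ha2) (not_lt.2 (homono h))
      · exact Fin.ext h
      · exact absurd (lt_of_le_of_lt ha1 hb2) (not_lt.2 (homono h))
    subst hjj
    refine ⟨rfl, funext fun i => ?_⟩
    by_cases hii : i = i₀
    · rw [hii, ha3, hb3]
    · obtain ⟨-, -, hc⟩ := C2 j g i hii (hg i) (v i) (hv i).1 (hv i).2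
      obtain ⟨-, -, hc'⟩ := C2 j g' i hii (hg' i) (v i) (hv' i).1 (hv' i).2
      rw [hc, hc']
  -- existence
  have hexist : ∀ v : Fin d → ℤ, (∀ i, 0 ≤ v i ∧ v i < (r i : ℤ)) →
      ∃ j g, (∀ i, g i < ng j i) ∧ v ∈ zRectAt (w j) (T j g) := by
    intro v hv
    have hx : ∀ i, ((v i).toNat : ℤ) = v i := fun i => Int.toNat_of_nonneg (hv i).1
    have hxr : ∀ i, (v i).toNat < r i := fun i => by
      have h5 := (hv i).1; have h6 := (hv i).2; omega
    have hxo : (v i₀).toNat < ∑ q ∈ Finset.range k, B q := by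
      have h7 := hxr i₀; rw [← hok] at h7; simpa [ho] using h7
    obtain ⟨p, hp, hop, hop'⟩ := slab_exists B k (v i₀).toNat hxo
    set j : Fin k := ⟨p, hp⟩ with hj
    have hjval : j.val = p := rfl
    have hople : o j.val ≤ (v i₀).toNat := hop
    have hop2 : (v i₀).toNat < o j.val + a j * w j i₀ := by
      rw [← hosucc j]; exact hop'
    have hm0 : 0 < w j i₀ := hw j i₀
    set Z := a j * w j i₀ with hZ
    clear_value Z
    set y := (v i₀).toNat - o j.val with hy
    have hyZ : y < Z := by omega
    set g : Fin d → ℕ := fun i => if i = i₀ then y / w j i₀ else (v i).toNat / w j i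
      with hgdef
    have hga : g i₀ < a j := by
      simp only [hgdef, if_pos rfl]
      rw [Nat.div_lt_iff_lt_mul hm0, ← hZ]
      exact hyZ
    refine ⟨j, g, ?_, ?_⟩
    · intro i
      by_cases hii : i = i₀
      · rw [hii]; simpa [hng] using hga
      · simp only [hng, hgdef, if_neg hii]
        exact Nat.div_lt_div_of_lt_of_dvd (hwdvd j i hii) (hxr i)
    · intro i
      by_cases hii : i = i₀
      · rw [hii]
        simp only [hT, hgdef, eq_self_iff_true, if_true]
        have e1 : o j.val + y = (v i₀).toNat := Nat.add_sub_cancel' hople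
        have h1' : o j.val + y / w j i₀ * w j i₀ ≤ (v i₀).toNat := by
          rw [← e1]; exact Nat.add_le_add_left (Nat.div_mul_le_self _ _) _
        have h2' : (v i₀).toNat < o j.val + y / w j i₀ * w j i₀ + w j i₀ := by
          rw [Nat.add_assoc, ← e1]
          exact Nat.add_lt_add_left (Nat.lt_div_mul_add hm0) _
        constructor
        · rw [← hx i₀]; exact_mod_cast h1'
        · rw [← hx i₀]; exact_mod_cast h2'
      · simp only [hT, hgdef, if_neg hii]
        have h1 : (v i).toNat / w j i * w j i ≤ (v i).toNat := Nat.div_mul_le_self _ _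
        have h2 : (v i).toNat < (v i).toNat / w j i * w j i + w j i :=
          Nat.lt_div_mul_add (hw j i)
        constructor
        · rw [← hx i]; exact_mod_cast h1
        · rw [← hx i]; exact_mod_cast h2
  -- the tile set
  set S : Finset (Fin k × (Fin d → ℤ)) :=
    Finset.univ.biUnion (fun j =>
      (Fintype.piFinset (fun i => Finset.range (ng j i))).image (fun g => (j, T j g)))
    with hS
  have hmemS : ∀ p : Fin k × (Fin d → ℤ), p ∈ S ↔
      ∃ j g, (∀ i, g i < ng j i) ∧ p = (j, T j g) := by
    intro p
    simp only [hS, Finset.mem_biUnion, Finset.mem_image, Finset.mem_univ, true_and,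
      Fintype.mem_piFinset, Finset.mem_range]
    constructor
    · rintro ⟨j, g, hg, rfl⟩; exact ⟨j, g, hg, rfl⟩
    · rintro ⟨j, g, hg, rfl⟩; exact ⟨j, g, hg, rfl⟩
  refine ⟨S, ?_, ?_⟩
  · intro p hp q hq hpq
    rw [Finset.mem_coe, hmemS] at hp hq
    obtain ⟨j, g, hg, rfl⟩ := hp
    obtain ⟨j', g', hg', rfl⟩ := hq
    refine Set.disjoint_left.mpr fun v hv hv' => hpq ?_
    obtain ⟨hjj, hgg⟩ := huniq j j' g g' hg hg' v hv hv'
    rw [hjj, hgg]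
  · ext v
    simp only [Set.mem_iUnion, exists_prop]
    constructor
    · rintro ⟨jt, hjt, hvm⟩
      rw [hmemS] at hjt
      obtain ⟨j, g, hg, rfl⟩ := hjt
      intro i
      by_cases hii : i = i₀
      · rw [hii]
        obtain ⟨h1, h2, -⟩ := C1 j g (hg i₀) (v i₀) (hvm i₀).1 (hvm i₀).2
        refine ⟨h1, ?_⟩
        simpa using h2
      · obtain ⟨h1, h2, -⟩ := C2 j g i hii (hg i) (v i) (hvm i).1 (hvm i).2
        refine ⟨h1, ?_⟩
        simpa using h2
    · intro hv
      have hv' : ∀ i, 0 ≤ v i ∧ v i < (r i : ℤ) := by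
        intro i
        have h8 := hv i
        simpa using h8
      obtain ⟨j, g, hg, hmem⟩ := hexist v hv'
      exact ⟨(j, T j g), (hmemS _).2 ⟨j, g, hg, rfl⟩, hmem⟩
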